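/- arXiv:1112.3216 — 4 statements merged into one kernel-verified Lean document; each statement's English description precedes it below -/
import Mathlib

section
/- For every complex number z not on the negative real axis and every nonnegative real number λ, one has |λ + z| ≥ (λ + |z|)^{1/2} · Re(√z), where √z denotes the principal branch of the square root. -/
/-!
Write `w = √z`, so that `λ + z = λ + w²` and `‖w‖² = ‖z‖`. With `a = Re w`, `b = Im w`,
`‖λ + w²‖² - (λ + ‖w‖²) a² = (λ - b²)² + a² (λ + b²)`, which is nonnegative for `λ ≥ 0`.
-/

namespace Complex

theorem sq_norm_ofReal_add_sq (l : ℝ) (w : ℂ) :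
    ‖(l : ℂ) + w ^ 2‖ ^ 2 =
      (l + ‖w‖ ^ 2) * w.re ^ 2 + ((l - w.im ^ 2) ^ 2 + w.re ^ 2 * (l + w.im ^ 2)) := by
  rw [Complex.sq_norm, Complex.sq_norm, normSq_apply, normSq_apply]
  simp only [add_re, add_im, ofReal_re, ofReal_im, pow_two, mul_re, mul_im]
  ring

theorem sqrt_add_sq_norm_mul_re_le_norm_ofReal_add_sq {l : ℝ} (hl : 0 ≤ l) (w : ℂ) :
    √(l + ‖w‖ ^ 2) * w.re ≤ ‖(l : ℂ) + w ^ 2‖ := by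
  refine le_of_pow_le_pow_left₀ two_ne_zero (norm_nonneg _) ?_
  rw [sq_norm_ofReal_add_sq, mul_pow, Real.sq_sqrt (by positivity)]
  have : 0 ≤ (l - w.im ^ 2) ^ 2 + w.re ^ 2 * (l + w.im ^ 2) := by positivity
  linarith

end Complex

theorem abs_add_ge_sqrt_mul_re_sqrt_general (z : ℂ)
    (l : ℝ) (hl : 0 ≤ l) :
    Real.sqrt (l + ‖z‖) * (z ^ (1/2 : ℂ)).re ≤ ‖(↑l + z : ℂ)‖ := by
  have hsq : (z ^ (1/2 : ℂ)) ^ 2 = z := by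
    rw [one_div]
    exact Complex.cpow_ofNat_inv_pow z 2
  simpa only [← norm_pow, hsq] using
    Complex.sqrt_add_sq_norm_mul_re_le_norm_ofReal_add_sq hl (z ^ (1/2 : ℂ))

/-- For every complex number `z` not on the negative real axis and every nonnegative
real `l`, one has `|l + z| ≥ (l + |z|)^(1/2) * Re (√z)`, where `√z = z ^ (1/2 : ℂ)`
is the principal branch of the square root. -/
theorem abs_add_ge_sqrt_mul_re_sqrt (z : ℂ) (hz : ¬ (z.re ≤ 0 ∧ z.im = 0))
    (l : ℝ) (hl : 0 ≤ l) :
    Real.sqrt (l + ‖z‖) * (z ^ (1/2 : ℂ)).re ≤ ‖(↑l + z : ℂ)‖ :=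
  abs_add_ge_sqrt_mul_re_sqrt_general z l hl
end

section
/- Let (λ_k) be a nondecreasing sequence of nonnegative reals tending to infinity (the eigenvalues of the Laplacian on a compact manifold), and let u = Σ_k c_k ψ_k with (ψ_k) an orthonormal basis of L² such that −Δ ψ_k = λ_k ψ_k. Then for every z ∈ ℂ \ ℝ₋, ‖u‖_{L²} ≤ |z|^{−1/2} (Re √z)^{−1} ‖(−Δ + z)u‖_{L²}. -/
/-!
Expanding in the Hilbert basis, it suffices to bound each coefficient:
`|z|^{1/2} Re √z ≤ |λ + z|` for `λ ≥ 0`. With `w = √z = a + ib`, this follows from the identity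
`|λ + w²|² - (λ + |w|²) a² = (λ - b²)² + a² (λ + b²) ≥ 0`.
-/

open Complex
open scoped ComplexOrder

lemma Complex.add_sq_norm_mul_sq_re_le_sq_norm_add_sq (w : ℂ) {t : ℝ} (ht : 0 ≤ t) :
    (t + ‖w‖ ^ 2) * w.re ^ 2 ≤ ‖(t : ℂ) + w ^ 2‖ ^ 2 := by
  rw [Complex.sq_norm, Complex.sq_norm, normSq_apply, normSq_apply]
  simp only [add_re, add_im, ofReal_re, ofReal_im, sq, mul_re, mul_im]
  nlinarith [sq_nonneg (t - w.im ^ 2),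
    mul_nonneg (sq_nonneg w.re) (add_nonneg ht (sq_nonneg w.im))]

lemma Complex.norm_mul_re_le_norm_add_sq (w : ℂ) {t : ℝ} (ht : 0 ≤ t) :
    ‖w‖ * w.re ≤ ‖(t : ℂ) + w ^ 2‖ := by
  refine (abs_le_of_sq_le_sq' ?_ (norm_nonneg _)).2
  calc (‖w‖ * w.re) ^ 2 = ‖w‖ ^ 2 * w.re ^ 2 := mul_pow _ _ _
    _ ≤ (t + ‖w‖ ^ 2) * w.re ^ 2 := by gcongr; linarith
    _ ≤ _ := add_sq_norm_mul_sq_re_le_sq_norm_add_sq w ht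

lemma Complex.cpow_inv_two_re_pos {z : ℂ} (hz : ¬ z ≤ 0) : 0 < (z ^ (2⁻¹ : ℂ)).re := by
  rw [cpow_inv_two_re, Real.sqrt_pos]
  have hle : -z.re ≤ ‖z‖ := (neg_le_abs z.re).trans (abs_re_le_norm z)
  have hne : -z.re ≠ ‖z‖ := mt neg_re_eq_norm.1 hz
  linarith [lt_of_le_of_ne hle hne]

lemma HilbertBasis.mul_norm_le_of_forall_mul_norm_repr_le {ι 𝕜 E : Type*} [RCLike 𝕜]
    [NormedAddCommGroup E] [InnerProductSpace 𝕜 E] (b : HilbertBasis ι 𝕜 E) {u v : E} {C : ℝ}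
    (hC : 0 ≤ C) (h : ∀ i, C * ‖b.repr u i‖ ≤ ‖b.repr v i‖) : C * ‖u‖ ≤ ‖v‖ := by
  have := lp.norm_mono two_ne_zero (x := b.repr ((C : 𝕜) • u)) (y := b.repr v) fun i => by
    simpa [norm_smul, abs_of_nonneg hC] using h i
  simpa [norm_smul, abs_of_nonneg hC] using this

open scoped ComplexOrder in
/-- Abstract `L²` resolvent estimate: if `H` is a Hilbert space with Hilbert basis
`(ψ_k)` (encoded by `b`), `(λ_k)` are nonnegative reals, and `v` plays the role of
`(A + z)u`, i.e. its coefficients satisfy `b.repr v k = (λ k + z) * b.repr u k`,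
then `‖u‖ ≤ |z|^{-1/2} (Re √z)⁻¹ ‖v‖` for `z ∉ ℝ₋`. -/
theorem L2_resolvent_estimate
    {H : Type*} [NormedAddCommGroup H] [InnerProductSpace ℂ H] [CompleteSpace H]
    (b : HilbertBasis ℕ ℂ H) (lam : ℕ → ℝ) (hlam : ∀ k, 0 ≤ lam k)
    (z : ℂ) (hz : ¬ (z.re ≤ 0 ∧ z.im = 0))
    (u v : H) (hv : ∀ k, b.repr v k = (↑(lam k) + z) * b.repr u k) :
    ‖u‖ ≤ ‖z‖ ^ (-(1/2) : ℝ) * ((z ^ (1/2 : ℂ)).re)⁻¹ * ‖v‖ := by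
  have hw_sq : (z ^ (1/2 : ℂ)) ^ 2 = z := by rw [one_div]; exact cpow_ofNat_inv_pow z 2
  have hw_norm : ‖z ^ (1/2 : ℂ)‖ = ‖z‖ ^ (1/2 : ℝ) := by simpa using norm_cpow_inv_nat z 2
  have hw_re : 0 < (z ^ (1/2 : ℂ)).re := by rw [one_div]; exact cpow_inv_two_re_pos hz
  set w := z ^ (1/2 : ℂ)
  have hC : 0 < ‖w‖ * w.re := mul_pos (hw_re.trans_le (re_le_norm w)) hw_re
  have hcoeff : ∀ k, ‖w‖ * w.re * ‖b.repr u k‖ ≤ ‖b.repr v k‖ := fun k => by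
    rw [hv k, norm_mul, ← hw_sq]
    gcongr
    exact norm_mul_re_le_norm_add_sq w (hlam k)
  have hmain := b.mul_norm_le_of_forall_mul_norm_repr_le hC.le hcoeff
  rwa [Real.rpow_neg (norm_nonneg z), ← hw_norm, ← mul_inv, inv_mul_eq_div, le_div_iff₀ hC,
    mul_comm]
end

section
/- For every τ ≠ 0 and every ν ∈ ℕ, the series Σ_{m=0}^∞ (2^ν |τ| (1+m)) / ((m² − τ²)² + 4^{ν+1} τ²) converges and is bounded by a constant C independent of τ and ν (for |τ| ≥ 1). -/
set_option maxHeartbeats 1000000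

open Real

lemma arctan_sub_lower {a b M : ℝ} (hab : a < b) (ha : a ^ 2 ≤ M) (hb : b ^ 2 ≤ M) :
    (b - a) / (1 + M) ≤ Real.arctan b - Real.arctan a := by
  obtain ⟨c, hc, hderiv⟩ := exists_hasDerivAt_eq_slope Real.arctan (fun x => 1 / (1 + x ^ 2))
    hab (Real.continuous_arctan.continuousOn) (fun x _ => Real.hasDerivAt_arctan x)
  have hc2 : c ^ 2 ≤ M := by
    rcases le_or_gt 0 c with h | h
    · nlinarith [hc.2]
    · nlinarith [hc.1]
  have hM : (0:ℝ) ≤ M := le_trans (sq_nonneg a) ha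
  have h1 : (0:ℝ) < 1 + c ^ 2 := by positivity
  have hba : (0:ℝ) < b - a := sub_pos.2 hab
  have e : Real.arctan b - Real.arctan a = (b - a) / (1 + c ^ 2) := by
    field_simp at hderiv
    field_simp
    linarith [hderiv]
  rw [e]
  gcongr

lemma key_bound (A T u : ℝ) (hA : 1 ≤ A) (hT : 1 ≤ T) (hu : 0 ≤ u) :
    A * T * (1 + u) / ((u ^ 2 - T ^ 2) ^ 2 + (2 * A * T) ^ 2) ≤
      10 * (Real.arctan (((u + 1) ^ 2 - T ^ 2) / (2 * A * T)) -
        Real.arctan ((u ^ 2 - T ^ 2) / (2 * A * T))) := by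
  have hA0 : (0:ℝ) < A := lt_of_lt_of_le one_pos hA
  have hT0 : (0:ℝ) < T := lt_of_lt_of_le one_pos hT
  obtain ⟨D, hDdef⟩ : ∃ D : ℝ, D = 2 * A * T := ⟨_, rfl⟩
  have hDpos : 0 < D := by rw [hDdef]; positivity
  rw [← hDdef]
  obtain ⟨a, ha⟩ : ∃ a : ℝ, a = (u ^ 2 - T ^ 2) / D := ⟨_, rfl⟩
  obtain ⟨b, hb⟩ : ∃ b : ℝ, b = ((u + 1) ^ 2 - T ^ 2) / D := ⟨_, rfl⟩
  rw [← ha, ← hb]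
  have haD : a * D = u ^ 2 - T ^ 2 := by rw [ha]; field_simp
  have hbD : b * D = (u + 1) ^ 2 - T ^ 2 := by rw [hb]; field_simp
  have hbaD : (b - a) * D = 2 * u + 1 := by linear_combination hbD - haD
  have hab : a < b := by nlinarith [hbaD, hDpos, hu]
  have hden : (u ^ 2 - T ^ 2) ^ 2 + D ^ 2 = D ^ 2 * (1 + a ^ 2) := by
    linear_combination (-(a * D + u ^ 2 - T ^ 2)) * haD
  have hb2 : b ^ 2 ≤ 19 + 19 * a ^ 2 := by
    rcases le_or_gt u (2 * T) with hm | hm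
    · have hd : b - a ≤ 5 / 2 := by
        by_contra h
        push_neg at h
        nlinarith [hbaD, hDpos, hA, hT, hDdef, mul_pos hA0 hT0]
      have hd0 : (0:ℝ) ≤ b - a := le_of_lt (sub_pos.2 hab)
      nlinarith [sq_nonneg (2 * a - b), hd, hd0]
    · have hx0 : (0:ℝ) < u ^ 2 - T ^ 2 := by nlinarith [mul_pos (sub_pos.2 hm) (by positivity : (0:ℝ) < u + 2 * T)]
      have ha0 : (0:ℝ) < a := by rw [ha]; exact div_pos hx0 hDpos
      have hpoly : 2 * u + 1 ≤ 2 * (u ^ 2 - T ^ 2) := by nlinarith [sq_nonneg (u - 2), hm, hT]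
      have hd2a : b - a ≤ 2 * a := by
        by_contra h
        push_neg at h
        nlinarith [hbaD, haD, hDpos, hpoly, mul_pos (sub_pos.2 (by linarith : 2 * a < b - a)) hDpos]
      nlinarith [hab, hd2a, ha0]
  have hP : (1 + u) * (1 + (a ^ 2 + b ^ 2)) ≤ 20 * (2 * u + 1) * (1 + a ^ 2) := by
    nlinarith [mul_nonneg (by linarith : (0:ℝ) ≤ 1 + u) (by linarith : (0:ℝ) ≤ 19 + 19 * a ^ 2 - b ^ 2),
      mul_nonneg hu (by positivity : (0:ℝ) ≤ 1 + a ^ 2)]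
  have harc := arctan_sub_lower hab (by nlinarith [sq_nonneg b] : a ^ 2 ≤ a ^ 2 + b ^ 2)
    (by nlinarith [sq_nonneg a] : b ^ 2 ≤ a ^ 2 + b ^ 2)
  have T1 : A * T * (1 + u) / ((u ^ 2 - T ^ 2) ^ 2 + D ^ 2) ≤
      10 * ((b - a) / (1 + (a ^ 2 + b ^ 2))) := by
    rw [hden, show 10 * ((b - a) / (1 + (a ^ 2 + b ^ 2))) = (10 * (b - a)) / (1 + (a ^ 2 + b ^ 2))
      from by ring, div_le_div_iff₀ (by positivity) (by positivity)]
    have hRHS : 10 * (b - a) * (D ^ 2 * (1 + a ^ 2)) = 20 * A * T * (2 * u + 1) * (1 + a ^ 2) := by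
      linear_combination (10 * D * (1 + a ^ 2)) * hbaD + (10 * (2 * u + 1) * (1 + a ^ 2)) * hDdef
    rw [hRHS]
    nlinarith [mul_le_mul_of_nonneg_left hP (le_of_lt (mul_pos hA0 hT0))]
  linarith [T1, harc]

/-- There is a constant `C > 0`, independent of `τ` and `ν`, so that for all real `τ`
with `|τ| ≥ 1` and all `ν ∈ ℕ` the series
`Σ_{m≥0} 2^ν |τ| (1+m) / ((m² - τ²)² + 4^{ν+1} τ²)` converges and its sum is `≤ C`. -/
theorem series_uniform_bound :
    ∃ C : ℝ, 0 < C ∧ ∀ (τ : ℝ), 1 ≤ |τ| → ∀ ν : ℕ,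
      Summable (fun m : ℕ =>
        2 ^ ν * |τ| * (1 + (m : ℝ)) / (((m : ℝ) ^ 2 - τ ^ 2) ^ 2 + 4 ^ (ν + 1) * τ ^ 2)) ∧
      (∑' m : ℕ,
        2 ^ ν * |τ| * (1 + (m : ℝ)) / (((m : ℝ) ^ 2 - τ ^ 2) ^ 2 + 4 ^ (ν + 1) * τ ^ 2)) ≤ C := by
  refine ⟨10 * Real.pi, by positivity, ?_⟩
  intro τ hτ ν
  have hA : (1:ℝ) ≤ 2 ^ ν := one_le_pow₀ (by norm_num)
  have h4 : (4:ℝ) ^ (ν + 1) * τ ^ 2 = (2 * 2 ^ ν * |τ|) ^ 2 := by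
    have h44 : (4:ℝ) ^ ν = ((2:ℝ) ^ ν) ^ 2 := by
      rw [show (4:ℝ) = 2 ^ 2 by norm_num, ← pow_mul, ← pow_mul, Nat.mul_comm]
    rw [pow_succ, h44, mul_pow, mul_pow, sq_abs]
    ring
  have hterm : ∀ m : ℕ,
      2 ^ ν * |τ| * (1 + (m : ℝ)) / (((m : ℝ) ^ 2 - τ ^ 2) ^ 2 + 4 ^ (ν + 1) * τ ^ 2) ≤
      10 * (Real.arctan ((((m:ℝ) + 1) ^ 2 - |τ| ^ 2) / (2 * 2 ^ ν * |τ|)) -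
        Real.arctan (((m:ℝ) ^ 2 - |τ| ^ 2) / (2 * 2 ^ ν * |τ|))) := by
    intro m
    have e1 : 2 ^ ν * |τ| * (1 + (m : ℝ)) / (((m : ℝ) ^ 2 - τ ^ 2) ^ 2 + 4 ^ (ν + 1) * τ ^ 2)
        = 2 ^ ν * |τ| * (1 + (m : ℝ)) /
          (((m : ℝ) ^ 2 - |τ| ^ 2) ^ 2 + (2 * 2 ^ ν * |τ|) ^ 2) := by
      rw [h4, ← sq_abs τ]
    rw [e1]
    exact key_bound (2 ^ ν) |τ| (m:ℝ) hA hτ (Nat.cast_nonneg m)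
  have hnonneg : ∀ m : ℕ,
      0 ≤ 2 ^ ν * |τ| * (1 + (m : ℝ)) / (((m : ℝ) ^ 2 - τ ^ 2) ^ 2 + 4 ^ (ν + 1) * τ ^ 2) := by
    intro m; positivity
  have hbound : ∀ n : ℕ, ∑ m ∈ Finset.range n,
      2 ^ ν * |τ| * (1 + (m : ℝ)) / (((m : ℝ) ^ 2 - τ ^ 2) ^ 2 + 4 ^ (ν + 1) * τ ^ 2)
      ≤ 10 * Real.pi := by
    intro n
    set g : ℕ → ℝ := fun k => Real.arctan (((k:ℝ) ^ 2 - |τ| ^ 2) / (2 * 2 ^ ν * |τ|)) with hg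
    have hgn : g n < Real.pi / 2 := Real.arctan_lt_pi_div_two _
    have hg0 : -(Real.pi / 2) < g 0 := Real.neg_pi_div_two_lt_arctan _
    calc ∑ m ∈ Finset.range n,
        2 ^ ν * |τ| * (1 + (m : ℝ)) / (((m : ℝ) ^ 2 - τ ^ 2) ^ 2 + 4 ^ (ν + 1) * τ ^ 2)
        ≤ ∑ m ∈ Finset.range n, 10 * (g (m + 1) - g m) := by
          apply Finset.sum_le_sum
          intro m _
          show _ ≤ 10 * (Real.arctan (((((m+1:ℕ):ℝ)) ^ 2 - |τ| ^ 2) / (2 * 2 ^ ν * |τ|)) -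
            Real.arctan (((m:ℝ) ^ 2 - |τ| ^ 2) / (2 * 2 ^ ν * |τ|)))
          push_cast
          exact hterm m
      _ = 10 * ∑ m ∈ Finset.range n, (g (m + 1) - g m) := (Finset.mul_sum _ _ _).symm
      _ = 10 * (g n - g 0) := by rw [Finset.sum_range_sub g n]
      _ ≤ 10 * Real.pi := by nlinarith [Real.pi_pos]
  exact ⟨summable_of_sum_range_le hnonneg hbound, Summable.tsum_le_of_sum_range_le
    (summable_of_sum_range_le hnonneg hbound) hbound⟩
end

section
/- Let a^ν_{jk}(τ) = iτ(2^ν − 2j) 1_{[2^{ν−1}, 2^ν)}(j) / [((j+1/2)² + 2iτ(j+1/2) − τ² + λ_k)((j+1/2)² + i(2^ν+1)τ − τ² + λ_k)]. Then for m ≤ √(j² + λ_k) < m+1 with 2^{ν−1} ≤ j < 2^ν, one has |a^ν_{jk}(τ)| ≤ C · 2^ν |τ| / ((m² − τ²)² + 4^{ν+1} τ²) with C an absolute constant. -/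
/-!
Write `A = (j + 1/2)² + λ`. Both denominator factors have the form `(A - τ²) + i b` with
`|b| ≥ 2^ν |τ|`, while the numerator is at most `2^ν |τ|` in modulus. Since
`m² ≤ A ≤ m² + 3(m + 1)` and `|τ| ≥ 1`, replacing `A` by `m²` costs only `O(m)`, and `m²` is
itself controlled by `(A - τ²)² + b²`; hence each factor has squared modulus
`≳ (m² - τ²)² + 4^{ν+1} τ²`, and so does the product of the two moduli.
-/

open Complex

section

variable {m A τ p b : ℝ}

theorem sq_le_sq_sub_sq_add (hτ : 1 ≤ τ ^ 2) (hb : τ ^ 2 ≤ b ^ 2) (hmA : m ^ 2 ≤ A) :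
    m ^ 2 ≤ (A - τ ^ 2) ^ 2 + 2 * b ^ 2 := by
  nlinarith [sq_nonneg (A - τ ^ 2 - 1 / 2)]

theorem sq_sub_sq_add_le (hτ : 1 ≤ τ ^ 2) (hp : 1 ≤ p) (hb : p ^ 2 * τ ^ 2 ≤ b ^ 2)
    (hmA : m ^ 2 ≤ A) (hAm : A - m ^ 2 ≤ 3 * (m + 1)) :
    (m ^ 2 - τ ^ 2) ^ 2 + 4 * p ^ 2 * τ ^ 2 ≤ 112 * ((A - τ ^ 2) ^ 2 + b ^ 2) := by
  have hτb : τ ^ 2 ≤ b ^ 2 := (le_mul_of_one_le_left (sq_nonneg τ) (one_le_pow₀ hp)).trans hb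
  have hm := sq_le_sq_sub_sq_add hτ hτb hmA
  have hd : (A - m ^ 2) ^ 2 ≤ 18 * m ^ 2 + 18 := by
    nlinarith [pow_le_pow_left₀ (sub_nonneg.mpr hmA) hAm 2, sq_nonneg (m - 1)]
  calc (m ^ 2 - τ ^ 2) ^ 2 + 4 * p ^ 2 * τ ^ 2
      = ((A - τ ^ 2) - (A - m ^ 2)) ^ 2 + 4 * (p ^ 2 * τ ^ 2) := by ring
    _ ≤ 2 * (A - τ ^ 2) ^ 2 + 2 * (A - m ^ 2) ^ 2 + 4 * b ^ 2 := by
      nlinarith [sq_nonneg (A - τ ^ 2 + (A - m ^ 2))]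
    _ ≤ 112 * ((A - τ ^ 2) ^ 2 + b ^ 2) := by nlinarith

theorem sq_sub_sq_add_le_norm_sq (hτ : 1 ≤ τ ^ 2) (hp : 1 ≤ p) (hb : p ^ 2 * τ ^ 2 ≤ b ^ 2)
    (hmA : m ^ 2 ≤ A) (hAm : A - m ^ 2 ≤ 3 * (m + 1)) :
    (m ^ 2 - τ ^ 2) ^ 2 + 4 * p ^ 2 * τ ^ 2 ≤ 112 * ‖((A - τ ^ 2 : ℝ) : ℂ) + b * I‖ ^ 2 := by
  rw [Complex.sq_norm, normSq_add_mul_I]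
  exact sq_sub_sq_add_le hτ hp hb hmA hAm

end

theorem le_mul_mul_of_le_mul_sq {S c u v : ℝ} (hc : 0 ≤ c) (hu : 0 ≤ u) (hv : 0 ≤ v)
    (hSu : S ≤ c * u ^ 2) (hSv : S ≤ c * v ^ 2) : S ≤ c * (u * v) := by
  rcases le_total u v with huv | hvu
  · calc S ≤ c * u ^ 2 := hSu
      _ ≤ c * (u * v) := by rw [sq]; gcongr
  · calc S ≤ c * v ^ 2 := hSv
      _ ≤ c * (u * v) := by rw [sq, mul_comm u]; gcongr

theorem coefficient_bound_real {p j lam τ m : ℝ} (hp1 : 1 ≤ p) (hpj : p ≤ 2 * j) (hjp : j ≤ p)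
    (hlam : 0 ≤ lam) (hτ : 1 ≤ |τ|) (hm0 : 0 ≤ m) (hm1 : m ^ 2 ≤ j ^ 2 + lam)
    (hm2 : j ^ 2 + lam < (m + 1) ^ 2) :
    ‖(τ : ℂ) * (p - 2 * j)‖
        / (‖((j : ℂ) + 1 / 2) ^ 2 + 2 * I * τ * ((j : ℂ) + 1 / 2) - τ ^ 2 + lam‖
          * ‖((j : ℂ) + 1 / 2) ^ 2 + I * (p + 1) * τ - τ ^ 2 + lam‖)
      ≤ 112 * p * |τ| / ((m ^ 2 - τ ^ 2) ^ 2 + 4 * p ^ 2 * τ ^ 2) := by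
  set A := (j + 1 / 2) ^ 2 + lam with hA
  set S := (m ^ 2 - τ ^ 2) ^ 2 + 4 * p ^ 2 * τ ^ 2
  have hτ2 : 1 ≤ τ ^ 2 := by nlinarith [sq_abs τ]
  have hjm : j < m + 1 := lt_of_abs_lt (abs_lt_of_sq_lt_sq (by nlinarith) (by linarith))
  have hmA : m ^ 2 ≤ A := by nlinarith
  have hAm : A - m ^ 2 ≤ 3 * (m + 1) := by nlinarith
  have hD₁ : ((j : ℂ) + 1 / 2) ^ 2 + 2 * I * τ * ((j : ℂ) + 1 / 2) - τ ^ 2 + lam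
      = ((A - τ ^ 2 : ℝ) : ℂ) + ((2 * (j + 1 / 2) * τ : ℝ) : ℂ) * I := by
    simp only [hA]; push_cast; ring
  have hD₂ : ((j : ℂ) + 1 / 2) ^ 2 + I * (p + 1) * τ - τ ^ 2 + lam
      = ((A - τ ^ 2 : ℝ) : ℂ) + (((p + 1) * τ : ℝ) : ℂ) * I := by
    simp only [hA]; push_cast; ring
  have hb₁ : p ^ 2 * τ ^ 2 ≤ (2 * (j + 1 / 2) * τ) ^ 2 := by
    rw [mul_pow]; gcongr; linarith
  have hb₂ : p ^ 2 * τ ^ 2 ≤ ((p + 1) * τ) ^ 2 := by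
    rw [mul_pow]; gcongr; linarith
  have hS₁ := sq_sub_sq_add_le_norm_sq hτ2 hp1 hb₁ hmA hAm
  have hS₂ := sq_sub_sq_add_le_norm_sq hτ2 hp1 hb₂ hmA hAm
  have hS : S ≤ 112 * (‖((j : ℂ) + 1 / 2) ^ 2 + 2 * I * τ * ((j : ℂ) + 1 / 2) - τ ^ 2 + lam‖
      * ‖((j : ℂ) + 1 / 2) ^ 2 + I * (p + 1) * τ - τ ^ 2 + lam‖) := by
    rw [hD₁, hD₂]
    exact le_mul_mul_of_le_mul_sq (by norm_num) (norm_nonneg _) (norm_nonneg _) hS₁ hS₂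
  have hS_pos : 0 < S := by positivity
  have hnum : ‖(τ : ℂ) * (p - 2 * j)‖ ≤ p * |τ| := by
    rw [show (τ : ℂ) * (p - 2 * j) = ((τ * (p - 2 * j) : ℝ) : ℂ) by push_cast; ring,
      norm_real, Real.norm_eq_abs, abs_mul, mul_comm]
    gcongr
    exact abs_le.2 ⟨by linarith, by linarith⟩
  calc _ ≤ p * |τ| / (S / 112) :=
        div_le_div₀ (by positivity) hnum (by positivity) (by linarith)
    _ = 112 * p * |τ| / S := by field_simp

/-- Bound for the coefficients `a^ν_{jk}(τ)`: there is an absolute constant `C` such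
that for `ν ≥ 1`, `2^{ν-1} ≤ j < 2^ν`, `λ_k ≥ 0`, `|τ| ≥ 1` and
`m ≤ √(j² + λ_k) < m + 1`, one has
`|τ(2^ν - 2j)| / (|(j+1/2)² + 2iτ(j+1/2) - τ² + λ_k| ⬝ |(j+1/2)² + i(2^ν+1)τ - τ² + λ_k|)`
`≤ C 2^ν |τ| / ((m² - τ²)² + 4^{ν+1} τ²)`. -/
theorem coefficient_bound :
    ∃ C : ℝ, 0 < C ∧ ∀ (ν : ℕ), 1 ≤ ν → ∀ (j : ℤ) (lam τ : ℝ) (m : ℕ),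
      (2:ℤ) ^ (ν - 1) ≤ j → j < (2:ℤ) ^ ν → 0 ≤ lam → 1 ≤ |τ| →
      ((m : ℝ) ^ 2 ≤ (j : ℝ) ^ 2 + lam) → ((j : ℝ) ^ 2 + lam < ((m : ℝ) + 1) ^ 2) →
      ‖(τ : ℂ) * ((2:ℂ) ^ ν - 2 * (j : ℂ))‖
          / (‖((j : ℂ) + 1/2) ^ 2 + 2 * Complex.I * τ * ((j : ℂ) + 1/2)
                - (τ : ℂ) ^ 2 + (lam : ℂ)‖
            * ‖((j : ℂ) + 1/2) ^ 2 + Complex.I * ((2:ℂ) ^ ν + 1) * τ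
                - (τ : ℂ) ^ 2 + (lam : ℂ)‖)
        ≤ C * 2 ^ ν * |τ| / (((m : ℝ) ^ 2 - τ ^ 2) ^ 2 + 4 ^ (ν + 1) * τ ^ 2) := by
  refine ⟨112, by norm_num, fun ν hν j lam τ m hj₁ hj₂ hlam hτ hm₁ hm₂ => ?_⟩
  obtain ⟨n, rfl⟩ : ∃ n, ν = n + 1 := ⟨ν - 1, by omega⟩
  rw [Nat.add_sub_cancel] at hj₁
  have hj₁' : (2 : ℝ) ^ n ≤ j := by exact_mod_cast hj₁
  have hj₂' : (j : ℝ) < 2 ^ (n + 1) := by exact_mod_cast hj₂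
  have h := coefficient_bound_real (p := 2 ^ (n + 1)) (one_le_pow₀ one_le_two)
    (by rw [pow_succ]; linarith) hj₂'.le hlam hτ m.cast_nonneg hm₁ hm₂
  rw [show (4 : ℝ) ^ (n + 1 + 1) = 4 * ((2 : ℝ) ^ (n + 1)) ^ 2 by
    rw [← pow_mul, pow_mul']; norm_num; ring]
  push_cast at h
  simpa only [mul_assoc] using h
end
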